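/- Let T be a triangulated category with coproducts and S ⊆ T a full triangulated subcategory. Suppose (S^{≤0}, S^{≥0}) is a t-structure on S, and suppose that S^{≤0} generates a t-structure on T, meaning that (Coprod(S^{≤0}), Σ Coprod(S^{≤0})^⊥) is a t-structure on T. Then the restriction to S of this generated t-structure equals the original one: S^{≤0} = S ∩ Coprod(S^{≤0}) and S^{≥0} = S ∩ Σ Coprod(S^{≤0})^⊥. -/

import Mathlib

open CategoryTheory CategoryTheory.Limits CategoryTheory.Pretriangulated

universe v u

variable (C : Type u) [Category.{v} C] [HasZeroObject C] [Preadditive C]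
  [HasShift C ℤ] [∀ n : ℤ, (shiftFunctor C n).Additive] [Pretriangulated C]
  [IsTriangulated C] [HasCoproducts.{v} C]

/-- A class of objects closed under isomorphisms, arbitrary (small) coproducts and extensions. -/
def IsCoprodClosed (S : Set C) : Prop :=
  (∀ ⦃X Y : C⦄, (X ≅ Y) → X ∈ S → Y ∈ S) ∧
  (∀ {ι : Type v} (f : ι → C), (∀ i, f i ∈ S) → (∐ f) ∈ S) ∧
  (∀ T ∈ distTriang C, T.obj₁ ∈ S → T.obj₃ ∈ S → T.obj₂ ∈ S)

/-- `Coprod A`: the smallest subcategory of `C` containing `A` and closed under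
arbitrary coproducts and extensions. -/
def Coprod (A : Set C) : Set C := ⋂₀ {S : Set C | A ⊆ S ∧ IsCoprodClosed C S}

/-- The right orthogonal `S^⊥ = {Y | Hom(X, Y) = 0 for all X ∈ S}`. -/
def rightPerp (S : Set C) : Set C := {Y | ∀ X ∈ S, ∀ f : X ⟶ Y, f = 0}

/-- The image `Σ S` of a class of objects under the shift. -/
def shiftSet (S : Set C) : Set C := (fun X => X⟦(1:ℤ)⟧) '' S

/-- `S` is a full triangulated subcategory: closed under isomorphisms, shifts in both
directions, and extensions. -/
def IsTriangulatedSubcat (S : Set C) : Prop :=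
  (∀ ⦃X Y : C⦄, (X ≅ Y) → X ∈ S → Y ∈ S) ∧
  (∀ X ∈ S, X⟦(1:ℤ)⟧ ∈ S) ∧ (∀ X ∈ S, X⟦(-1:ℤ)⟧ ∈ S) ∧
  (∀ T ∈ distTriang C, T.obj₁ ∈ S → T.obj₃ ∈ S → T.obj₂ ∈ S)

/-- `(le, ge)` is a t-structure on the full subcategory `S ⊆ C`, in the sense of
Beilinson–Bernstein–Deligne: `le = S^{≤0}` and `ge = S^{≥0}` are iso-closed classes of
objects of `S`, with `Σ le ⊆ le`, `Σ⁻¹ ge ⊆ ge`, `Hom(Σ le, ge) = 0`, and every object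
of `S` admits a truncation triangle `X⟦1⟧ → E → Y → X⟦2⟧` with `X ∈ le`, `Y ∈ ge`. -/
structure IsTStructureOn (S le ge : Set C) : Prop where
  le_subset : le ⊆ S
  ge_subset : ge ⊆ S
  le_iso : ∀ ⦃X Y : C⦄, (X ≅ Y) → X ∈ le → Y ∈ le
  ge_iso : ∀ ⦃X Y : C⦄, (X ≅ Y) → X ∈ ge → Y ∈ ge
  le_shift : ∀ X ∈ le, X⟦(1:ℤ)⟧ ∈ le
  ge_shift : ∀ X ∈ ge, X⟦(-1:ℤ)⟧ ∈ ge
  hom_zero : ∀ X ∈ le, ∀ Y ∈ ge, ∀ f : X⟦(1:ℤ)⟧ ⟶ Y, f = 0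
  exists_triangle : ∀ E ∈ S, ∃ (X Y : C) (_ : X ∈ le) (_ : Y ∈ ge)
    (f : X⟦(1:ℤ)⟧ ⟶ E) (g : E ⟶ Y) (h : Y ⟶ X⟦(1:ℤ)⟧⟦(1:ℤ)⟧),
    Triangle.mk f g h ∈ distTriang C

/-!
Objects `X` with `Hom(X⟦1⟧, Y) = 0` for a fixed `Y` form a class closed under isomorphisms,
coproducts and extensions, so `Hom(Coprod(S^{≤0})⟦1⟧, S^{≥0}) = 0`. Hence `S^{≥0}` lies in
`(Σ Coprod(S^{≤0}))^⊥`, and conversely an object `E` of `S` lying in `Coprod(S^{≤0})`, resp.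
in `(Σ Coprod(S^{≤0}))^⊥`, has vanishing `S^{≥0}`-, resp. `S^{≤0}`-part of its truncation
triangle, because the connecting morphism of that triangle is then forced to be zero.
-/

section

omit [IsTriangulated C]

variable {C}

theorem subset_coprod (A : Set C) : A ⊆ Coprod C A :=
  fun _ hX _ hM => hM.1 hX

theorem coprod_subset {A M : Set C} (hA : A ⊆ M) (hM : IsCoprodClosed C M) :
    Coprod C A ⊆ M :=
  fun _ hX => hX M ⟨hA, hM⟩

theorem isCoprodClosed_setOf_shift_hom_eq_zero (Y : C) :
    IsCoprodClosed C {X | ∀ f : X⟦(1:ℤ)⟧ ⟶ Y, f = 0} := by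
  refine ⟨?iso, ?coprod, ?ext⟩
  case iso =>
    intro X X' e hX f
    rw [← cancel_epi ((shiftFunctor C (1:ℤ)).map e.hom), comp_zero]
    exact hX _
  case coprod =>
    intro ι X hX f
    exact (isColimitOfPreserves (shiftFunctor C (1:ℤ))
      (colimit.isColimit (Discrete.functor X))).hom_ext fun j => by
        rw [comp_zero]
        exact hX j.as _
  case ext =>
    intro T hT h₁ h₃ f
    have hT' := rot_of_distTriang _ (rot_of_distTriang _ (rot_of_distTriang _ hT))
    obtain ⟨g, rfl⟩ := Triangle.yoneda_exact₂ _ hT' f (h₁ _)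
    rw [h₃ g]
    exact comp_zero

namespace IsTStructureOn

variable {S le ge : Set C}

theorem shift_hom_eq_zero_of_mem_coprod (t : IsTStructureOn C S le ge) {X Y : C}
    (hX : X ∈ Coprod C le) (hY : Y ∈ ge) (f : X⟦(1:ℤ)⟧ ⟶ Y) : f = 0 :=
  coprod_subset (M := {X | ∀ f : X⟦(1:ℤ)⟧ ⟶ Y, f = 0})
    (fun X hX => t.hom_zero X hX Y hY) (isCoprodClosed_setOf_shift_hom_eq_zero Y) hX f

theorem ge_subset_rightPerp (t : IsTStructureOn C S le ge) :
    ge ⊆ rightPerp C (shiftSet C (Coprod C le)) := by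
  rintro Y hY _ ⟨X, hX, rfl⟩ f
  exact t.shift_hom_eq_zero_of_mem_coprod hX hY f

omit [HasCoproducts C] in
/-- In the truncation triangle `A⟦1⟧ → E⟦1⟧ → B → A⟦2⟧`, the hypothesis kills `E⟦1⟧ → B`,
so `𝟙 B` factors through `A⟦2⟧ → B`, which vanishes as well. -/
theorem mem_le_of_shift_hom_eq_zero (t : IsTStructureOn C S le ge) {E : C}
    (hE : E⟦(1:ℤ)⟧ ∈ S) (h : ∀ Y ∈ ge, ∀ f : E⟦(1:ℤ)⟧ ⟶ Y, f = 0) : E ∈ le := by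
  obtain ⟨A, B, hA, hB, f, g, k, hT⟩ := t.exists_triangle _ hE
  obtain ⟨y, hy⟩ := Triangle.yoneda_exact₃ _ hT (𝟙 B)
    ((Category.comp_id g).trans (h B hB g))
  have hB0 : IsZero B := by
    rw [IsZero.iff_id_eq_zero, hy, t.hom_zero _ (t.le_shift A hA) B hB y]
    exact comp_zero
  have : IsIso f := (Triangle.isZero₃_iff_isIso₁ _ hT).1 hB0
  exact t.le_iso ((shiftFunctor C (1:ℤ)).preimageIso (asIso f)) hA

omit [HasCoproducts C] in
/-- In the truncation triangle `A⟦1⟧ → E → B → A⟦2⟧`, the hypothesis kills `A⟦1⟧ → E`,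
so `𝟙 (A⟦1⟧)` factors through `B⟦-1⟧ → A⟦1⟧`, which vanishes as well. -/
theorem mem_ge_of_shift_hom_eq_zero (t : IsTStructureOn C S le ge) {E : C}
    (hE : E ∈ S) (h : ∀ X ∈ le, ∀ f : X⟦(1:ℤ)⟧ ⟶ E, f = 0) : E ∈ ge := by
  obtain ⟨A, B, hA, hB, f, g, k, hT⟩ := t.exists_triangle E hE
  obtain ⟨y, hy⟩ := Triangle.coyoneda_exact₂ _ (inv_rot_of_distTriang _ hT)
    (𝟙 (A⟦(1:ℤ)⟧))
    ((Category.id_comp f).trans (h A hA f))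
  have hA0 : IsZero (A⟦(1:ℤ)⟧) := by
    rw [IsZero.iff_id_eq_zero, hy, t.hom_zero A hA _ (t.ge_shift B hB) y]
    exact zero_comp
  have : IsIso g := (Triangle.isZero₁_iff_isIso₂ _ hT).1 hA0
  exact t.ge_iso (asIso g).symm hB

end IsTStructureOn

end

theorem restriction_of_generated_tStructure (S le ge : Set C)
    (hS : IsTriangulatedSubcat C S) (t : IsTStructureOn C S le ge) :
    le = S ∩ Coprod C le ∧ ge = S ∩ rightPerp C (shiftSet C (Coprod C le)) := by
  constructor
  · refine (Set.subset_inter t.le_subset (subset_coprod le)).antisymm ?_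
    rintro E ⟨hES, hEL⟩
    exact t.mem_le_of_shift_hom_eq_zero (hS.2.1 E hES)
      fun Y hY => t.shift_hom_eq_zero_of_mem_coprod hEL hY
  · refine (Set.subset_inter t.ge_subset t.ge_subset_rightPerp).antisymm ?_
    rintro E ⟨hES, hER⟩
    exact t.mem_ge_of_shift_hom_eq_zero hES
      fun X hX => hER _ ⟨X, subset_coprod le hX, rfl⟩
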